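/- arXiv:1101.2524 — 2 statements merged into one kernel-verified Lean document; each statement's English description precedes it below -/
import Mathlib

section
/- Let n = 2^a and let F₁, ..., F_{2a} be pairwise anticommuting invertible n×n complex matrices. Then the collection of all 2^{2a} products F₁^{λ₁} F₂^{λ₂} ⋯ F_{2a}^{λ_{2a}} with λᵢ ∈ {0,1} (including the identity) is linearly independent over ℂ, and hence forms a basis of the space of all n×n complex matrices. -/
/-! Moving `F j` across the monomial `P λ = ∏ F i ^ λ i` costs one sign for every factor `F i`
with `i ≠ j`, so `P λ * (P μ)⁻¹` commutes with `F j` up to `(-1) ^ #((λ Δ μ) \ {j})`. When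
`λ ≠ μ`, the index set having even size lets one choose `j` making this exponent odd; then
`P λ * (P μ)⁻¹` anticommutes with the invertible `F j` and is therefore traceless. Thus
`X ↦ tr (X * (P μ)⁻¹) / n` is a family of functionals dual to the monomials, and since there are
`2 ^ (2a) = n ^ 2` of them they also span. -/

open Matrix

section SignCommute

variable {A : Type*} [Ring A]

def SignCommute (s : ℤˣ) (x b : A) : Prop := x * b = s • (b * x)

namespace SignCommute

variable {s t : ℤˣ} {x y b : A}

theorem one_left (b : A) : SignCommute 1 1 b := by
  simp [SignCommute]

theorem refl (b : A) : SignCommute 1 b b := by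
  simp [SignCommute]

theorem mul_left (hx : SignCommute s x b) (hy : SignCommute t y b) :
    SignCommute (s * t) (x * y) b := by
  unfold SignCommute at *
  rw [mul_assoc, hy, mul_smul_comm, ← mul_assoc, hx, smul_mul_assoc, smul_smul, mul_assoc,
    mul_comm t]

theorem list_prod_ofFn_left {m : ℕ} {f : Fin m → A} {s : Fin m → ℤˣ}
    (h : ∀ i, SignCommute (s i) (f i) b) :
    SignCommute (∏ i, s i) (List.ofFn f).prod b := by
  induction m with
  | zero => simpa using one_left b
  | succ m ih =>
    rw [List.ofFn_succ, List.prod_cons, Fin.prod_univ_succ]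
    exact (h 0).mul_left (ih fun i => h i.succ)

theorem units_inv_left {u : Aˣ} (h : SignCommute s (u : A) b) :
    SignCommute s (↑u⁻¹ : A) b := by
  unfold SignCommute at *
  have hbu : b * u = s • (u * b) := by rw [h, smul_smul, Int.units_mul_self, one_smul]
  calc (↑u⁻¹ * b : A) = ↑u⁻¹ * (b * u) * ↑u⁻¹ := by simp [mul_assoc]
    _ = s • (b * ↑u⁻¹) := by
      rw [hbu, mul_smul_comm, smul_mul_assoc, ← mul_assoc, Units.inv_mul, one_mul]

end SignCommute

end SignCommute

theorem Matrix.trace_eq_zero_of_signCommute_neg_one {n R : Type*} [Fintype n] [DecidableEq n]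
    [CommRing R] [NoZeroDivisors R] [NeZero (2 : R)] {X B : Matrix n n R} (hB : IsUnit B)
    (h : SignCommute (-1) X B) : trace X = 0 := by
  obtain ⟨u, rfl⟩ := hB
  have hanti : X * u.val = -(u.val * X) := by rwa [SignCommute, Units.neg_smul, one_smul] at h
  have hneg : trace X = -trace X :=
    calc trace X = trace (X * u.val * u.inv) := by rw [mul_assoc, u.val_inv, mul_one]
      _ = -trace (u.inv * u.val * X) := by rw [hanti, neg_mul, trace_neg, trace_mul_cycle]
      _ = -trace X := by rw [u.inv_val, one_mul]
  have htwo : 2 * trace X = 0 := by rw [two_mul]; nth_rewrite 2 [hneg]; exact add_neg_cancel _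
  exact (mul_eq_zero.mp htwo).resolve_left two_ne_zero

theorem Finset.exists_odd_card_erase {α : Type*} [Fintype α] [DecidableEq α]
    (hα : Even (Fintype.card α)) {s : Finset α} (hs : s.Nonempty) :
    ∃ j, Odd (s.erase j).card := by
  rcases Nat.even_or_odd s.card with heven | hodd
  · obtain ⟨j, hj⟩ := hs
    refine ⟨j, ?_⟩
    rw [card_erase_of_mem hj]
    exact Nat.Even.sub_odd (card_pos.mpr ⟨j, hj⟩) heven odd_one
  · obtain ⟨j, hj⟩ : ∃ j, j ∉ s := by
      by_contra! h
      rw [eq_univ_iff_forall.mpr h, card_univ] at hodd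
      exact Nat.not_odd_iff_even.mpr hα hodd
    exact ⟨j, by rwa [erase_eq_of_notMem hj]⟩

section Monomial

variable {m : ℕ}

def monomialSign (lam : Fin m → Bool) (j : Fin m) : ℤˣ :=
  ∏ i, if lam i ∧ i ≠ j then -1 else 1

theorem exists_monomialSign_mul_eq_neg_one (hm : Even m) {lam mu : Fin m → Bool}
    (hne : lam ≠ mu) : ∃ j, monomialSign lam j * monomialSign mu j = -1 := by
  classical
  set D := Finset.univ.filter fun i => lam i ≠ mu i
  have hD : D.Nonempty := by
    obtain ⟨i, hi⟩ := Function.ne_iff.mp hne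
    exact ⟨i, Finset.mem_filter.mpr ⟨Finset.mem_univ i, hi⟩⟩
  obtain ⟨j, hj⟩ := Finset.exists_odd_card_erase (by simpa using hm) hD
  refine ⟨j, ?_⟩
  have hfactor : ∀ i, ((if lam i ∧ i ≠ j then -1 else 1) * (if mu i ∧ i ≠ j then -1 else 1) : ℤˣ)
      = if i ∈ D.erase j then -1 else 1 := by
    intro i
    by_cases hij : i = j
    · simp [hij]
    · cases hl : lam i <;> cases hμ : mu i <;> simp [D, hij, hl, hμ]
  rw [monomialSign, monomialSign, ← Finset.prod_mul_distrib,
    Finset.prod_congr rfl fun i _ => hfactor i, ← Finset.prod_filter, Finset.filter_mem_eq_inter,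
    Finset.univ_inter, Finset.prod_const, hj.neg_one_pow]

variable {M : Type*} [Monoid M]

def boolMonomial (F : Fin m → M) (lam : Fin m → Bool) : M :=
  (List.ofFn fun i => if lam i then F i else 1).prod

theorem isUnit_boolMonomial {F : Fin m → M} (hF : ∀ i, IsUnit (F i)) (lam : Fin m → Bool) :
    IsUnit (boolMonomial F lam) :=
  List.prod_isUnit <| by
    simp only [List.mem_ofFn, forall_exists_index, forall_apply_eq_imp_iff]
    intro i
    split_ifs
    exacts [hF i, isUnit_one]

theorem signCommute_boolMonomial {R : Type*} [Ring R] {F : Fin m → R}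
    (hAC : ∀ i j, i ≠ j → F i * F j = -(F j * F i)) (lam : Fin m → Bool) (j : Fin m) :
    SignCommute (monomialSign lam j) (boolMonomial F lam) (F j) := by
  refine SignCommute.list_prod_ofFn_left fun i => ?_
  by_cases hl : lam i
  · by_cases hij : i = j
    · subst hij; simpa [hl] using SignCommute.refl (F i)
    · simp [SignCommute, hl, hij, hAC i j hij]
  · simpa [hl] using SignCommute.one_left (F j)

end Monomial

theorem linearIndependent_boolMonomial {n K : Type*} [Fintype n] [DecidableEq n] [Field K]
    [NeZero (2 : K)] (hn : (Fintype.card n : K) ≠ 0) {m : ℕ} (hm : Even m)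
    {F : Fin m → Matrix n n K} (hF : ∀ i, IsUnit (F i))
    (hAC : ∀ i j, i ≠ j → F i * F j = -(F j * F i)) :
    LinearIndependent K (boolMonomial F) := by
  let inv mu : Matrix n n K := ↑(isUnit_boolMonomial hF mu).unit⁻¹
  have htrace_self mu : trace (boolMonomial F mu * inv mu) = Fintype.card n := by
    rw [IsUnit.mul_val_inv, trace_one]
  have htrace_ne {lam mu} (hne : lam ≠ mu) : trace (boolMonomial F lam * inv mu) = 0 := by
    obtain ⟨j, hj⟩ := exists_monomialSign_mul_eq_neg_one hm hne
    refine trace_eq_zero_of_signCommute_neg_one (hF j) ?_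
    rw [← hj]
    exact (signCommute_boolMonomial hAC lam j).mul_left
      (signCommute_boolMonomial hAC mu j).units_inv_left
  refine .of_pairwise_dual_eq_zero_one _
    (fun mu => (Fintype.card n : K)⁻¹ • (traceLinearMap n K K ∘ₗ LinearMap.mulRight K (inv mu)))
    (fun mu lam hne => ?_) (fun mu => ?_)
  · simp [htrace_ne (Ne.symm hne)]
  · simp [htrace_self, hn]

theorem anticommuting_products_linearly_independent {a : ℕ}
    (F : Fin (2 * a) → Matrix (Fin (2 ^ a)) (Fin (2 ^ a)) ℂ)
    (hInv : ∀ i, IsUnit (F i))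
    (hAC : ∀ i j, i ≠ j → F i * F j = -(F j * F i)) :
    LinearIndependent ℂ
      (fun lam : Fin (2 * a) → Bool =>
        (List.ofFn (fun i => if lam i then F i else 1)).prod) ∧
    Submodule.span ℂ
      (Set.range (fun lam : Fin (2 * a) → Bool =>
        (List.ofFn (fun i => if lam i then F i else 1)).prod)) = ⊤ := by
  have hli : LinearIndependent ℂ (boolMonomial F) :=
    linearIndependent_boolMonomial (by simp) (even_two_mul a) hInv hAC
  refine ⟨hli, hli.span_eq_top_of_card_eq_finrank ?_⟩
  simp [Module.finrank_matrix, ← pow_add, two_mul]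
end

section
/- Let W be the n×n real matrix with columns formed (up to scaling by √(2/n)) from odd-indexed diagonal entries of the matrices A₁ = I, A₂, ..., A_{n/2} where the Aᵢ are 2n'×2n' diagonal ±1 matrices (n' = n) that are pairwise multiplicatively closed (AᵢAⱼ = A_k), traceless for i ≥ 2, and whose diagonal entries satisfy Aᵢ(2j-1,2j-1) = Aᵢ(2j,2j). Then W is an orthogonal matrix: WᵀW = I. -/
open Matrix

def pairEquiv (m : ℕ) : Fin (m+1) × Fin 2 ≃ Fin (2*(m+1)) where
  toFun p := ⟨2 * p.1.1 + p.2.1, by have := p.1.2; have := p.2.2; omega⟩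
  invFun x := (⟨x.1 / 2, by have := x.2; omega⟩, ⟨x.1 % 2, by omega⟩)
  left_inv p := by
    have := p.2.2
    ext <;> simp <;> omega
  right_inv x := by
    ext
    simp
    omega

theorem W_matrix_orthogonal {m : ℕ}
    (A : Fin (m + 1) → Matrix (Fin (2 * (m + 1))) (Fin (2 * (m + 1))) ℂ)
    (hDiag : ∀ i, ∀ j k : Fin (2 * (m + 1)), j ≠ k → A i j k = 0)
    (hPM : ∀ i, ∀ j : Fin (2 * (m + 1)), A i j j = 1 ∨ A i j j = -1)
    (h0 : A 0 = 1)
    (hInj : Function.Injective A)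
    (hClosed : ∀ i j, ∃ k, A i * A j = A k)
    (hTr : ∀ k, A k ≠ 1 → (A k).trace = 0)
    (hPair : ∀ i, ∀ j : Fin (m + 1),
      A i ⟨2 * j.1, by omega⟩ ⟨2 * j.1, by omega⟩
        = A i ⟨2 * j.1 + 1, by omega⟩ ⟨2 * j.1 + 1, by omega⟩)
    (W : Matrix (Fin (m + 1)) (Fin (m + 1)) ℝ)
    (hW : ∀ j i, W j i = Real.sqrt (2 / (2 * (m + 1)))
      * (A i ⟨2 * j.1, by omega⟩ ⟨2 * j.1, by omega⟩).re) :
    Wᵀ * W = 1 := by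
  -- general product formula
  have hmul : ∀ i i' (j k : Fin (2*(m+1))), (A i * A i') j k = A i j j * A i' j k := by
    intro i i' j k
    rw [Matrix.mul_apply, Finset.sum_eq_single j]
    · intro b _ hb
      rw [hDiag i j b (Ne.symm hb), zero_mul]
    · intro h; exact absurd (Finset.mem_univ j) h
  have hsq : ∀ i, A i * A i = 1 := by
    intro i
    ext j k
    by_cases h : j = k
    · subst h
      rw [hmul, Matrix.one_apply_eq]
      rcases hPM i j with h1 | h1 <;> rw [h1] <;> ring
    · rw [hmul, hDiag i j k h, mul_zero, Matrix.one_apply_ne h]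
  -- imaginary parts vanish
  have him : ∀ i (j : Fin (2*(m+1))), (A i j j).im = 0 := by
    intro i j
    rcases hPM i j with h1 | h1 <;> rw [h1] <;> simp
  -- sum over pairs
  have hsum : ∀ (f : Fin (2*(m+1)) → ℂ),
      ∑ x, f x = ∑ j : Fin (m+1), (f ⟨2*j.1, by omega⟩ + f ⟨2*j.1+1, by omega⟩) := by
    intro f
    rw [← Equiv.sum_comp (pairEquiv m) f, Fintype.sum_prod_type]
    apply Finset.sum_congr rfl
    intro j _
    rw [Fin.sum_univ_two]
    rfl
  have key : ∀ i i', ∑ j : Fin (m+1),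
      (A i ⟨2*j.1, by omega⟩ ⟨2*j.1, by omega⟩).re *
      (A i' ⟨2*j.1, by omega⟩ ⟨2*j.1, by omega⟩).re
      = if i = i' then (m+1 : ℝ) else 0 := by
    intro i i'
    obtain ⟨k, hk⟩ := hClosed i i'
    have hent : ∀ j : Fin (m+1),
        (A i ⟨2*j.1, by omega⟩ ⟨2*j.1, by omega⟩).re *
        (A i' ⟨2*j.1, by omega⟩ ⟨2*j.1, by omega⟩).re
        = (A k ⟨2*j.1, by omega⟩ ⟨2*j.1, by omega⟩).re := by
      intro j
      rw [← hk, hmul, Complex.mul_re, him, zero_mul, sub_zero]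
    rw [Finset.sum_congr rfl (fun j _ => hent j)]
    by_cases hii : i = i'
    · subst hii
      rw [hsq] at hk
      simp [if_pos rfl, ← hk, Matrix.one_apply_eq]
    · rw [if_neg hii]
      have hk1 : A k ≠ 1 := by
        intro h1
        apply hii
        apply hInj
        calc A i = A i * (A i' * A i') := by rw [hsq, mul_one]
        _ = (A i * A i') * A i' := by rw [mul_assoc]
        _ = A i' := by rw [hk, h1, one_mul]
      have htr := hTr k hk1
      have htr2 : ∑ x, A k x x = 0 := by
        rw [← htr]; rfl
      rw [hsum] at htr2
      have htr3 : ∑ j : Fin (m+1), A k ⟨2*j.1, by omega⟩ ⟨2*j.1, by omega⟩ = 0 := by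
        have : ∀ j : Fin (m+1), A k ⟨2*j.1, by omega⟩ ⟨2*j.1, by omega⟩
            + A k ⟨2*j.1+1, by omega⟩ ⟨2*j.1+1, by omega⟩
            = 2 * A k ⟨2*j.1, by omega⟩ ⟨2*j.1, by omega⟩ := by
          intro j; rw [← hPair k j]; ring
        rw [Finset.sum_congr rfl (fun j _ => this j), ← Finset.mul_sum] at htr2
        have h2 : (2:ℂ) ≠ 0 := by norm_num
        exact (mul_eq_zero.mp htr2).resolve_left h2
      have := congrArg Complex.re htr3
      rw [Complex.re_sum] at this
      simpa using this
  ext i i'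
  rw [Matrix.mul_apply]
  have hrw : ∀ j : Fin (m+1), Wᵀ i j * W j i'
      = (2 / (2*(m+1)) : ℝ) * ((A i ⟨2*j.1, by omega⟩ ⟨2*j.1, by omega⟩).re *
        (A i' ⟨2*j.1, by omega⟩ ⟨2*j.1, by omega⟩).re) := by
    intro j
    rw [Matrix.transpose_apply, hW, hW, mul_mul_mul_comm,
      Real.mul_self_sqrt (by positivity)]
  rw [Finset.sum_congr rfl (fun j _ => hrw j), ← Finset.mul_sum, key]
  by_cases hii : i = i'
  · subst hii
    rw [if_pos rfl, Matrix.one_apply_eq]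
    field_simp
  · rw [if_neg hii, Matrix.one_apply_ne hii, mul_zero]
end
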